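/- Let k, n be nonnegative integers with k ≤ p·n and 0 < p < 1 with q = 1 - p. Then B_{n,k}(p)/b_{n,k}(p) ≤ U(n,k,p) < 2·L(n,k,p), where the first inequality is an equality if and only if k = 0. Moreover U(n,k,p) ≤ 1 + 2·√(q·(k+p)). -/

import Mathlib

open Real

/-- Binomial probability `b_{n,k}(p)`. -/
noncomputable def b (n k : ℕ) (p : ℝ) : ℝ :=
  (n.choose k : ℝ) * p ^ k * (1 - p) ^ (n - k)

/-- Lower tail probability `B_{n,k}(p)`. -/
noncomputable def B (n k : ℕ) (p : ℝ) : ℝ :=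
  ∑ j ∈ Finset.range (k + 1), (n.choose j : ℝ) * p ^ j * (1 - p) ^ (n - j)

noncomputable def L (n k p : ℝ) : ℝ :=
  (k + 1 - p * n + Real.sqrt ((p * n - k + 1) ^ 2 + 4 * (1 - p) * k)) / 2

noncomputable def V (n k p a : ℝ) : ℝ :=
  a + p * (n - k + a + 1) / (p * n + p - k + a)

noncomputable def U (n k p : ℝ) : ℝ := ⨅ a : ℕ, V n k p (a : ℝ)

/-!
Below the mode the ratios `b_j / b_{j+1} = (j + 1) q / ((n - j) p)` are `< 1` and increase with `j`.
For `a < k` and `M = k - a`, the terms `b_j` with `j < M` are therefore dominated by a geometric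
series of ratio `r = M q / ((n - M + 1) p)` ending at `b_k`, and the other `a + 1` terms by `b_k`;
this gives `B / b_k < a + 1 + r / (1 - r) = V a`. For `a ≥ k` simply `B / b_k ≤ k + 1 ≤ V a`,
with equality only when `k = 0`.

For the upper bounds on `U` it suffices to exhibit one good `a`. In terms of
`t = p n + p - k + a`, `V` is `k - p n + t + p q (n + 1) / t`, which is at most `k - p n + m` when
`t` lies between the roots of `t ^ 2 - m t + p q (n + 1)`; such an `a` exists once the roots are
at least `1` apart.
-/

theorem Finset.sub_mul_sum_range_le {R : Type*} [Field R] [LinearOrder R] [IsStrictOrderedRing R]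
    {f : ℕ → R} {α β : R} {M : ℕ} (h : ∀ i < M, α * f i ≤ β * f (i + 1)) :
    (α - β) * ∑ i ∈ Finset.range M, f i ≤ β * (f M - f 0) := by
  have hsum : α * ∑ i ∈ Finset.range M, f i ≤ β * ∑ i ∈ Finset.range M, f (i + 1) := by
    rw [Finset.mul_sum, Finset.mul_sum]
    exact Finset.sum_le_sum fun i hi => h i (Finset.mem_range.mp hi)
  have hshift :
      ∑ i ∈ Finset.range M, f (i + 1) = ∑ i ∈ Finset.range M, f i + f M - f 0 := by
    rw [← Finset.sum_range_succ, Finset.sum_range_succ']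
    ring
  rw [hshift] at hsum
  linarith

section Binomial

variable {n k j : ℕ} {p : ℝ}

theorem natCast_le_of_le_mul (hp1 : p ≤ 1) (hk : (k : ℝ) ≤ p * n) : k ≤ n := by
  have : (k : ℝ) ≤ n := hk.trans (by nlinarith [(n.cast_nonneg : (0 : ℝ) ≤ n)])
  exact_mod_cast this

theorem b_nonneg (hp0 : 0 ≤ p) (hp1 : p ≤ 1) : 0 ≤ b n j p := by
  unfold b
  have : 0 ≤ 1 - p := by linarith
  positivity

theorem b_pos (hj : j ≤ n) (hp0 : 0 < p) (hp1 : p < 1) : 0 < b n j p := by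
  have : 0 < 1 - p := by linarith
  have : 0 < (n.choose j : ℝ) := by exact_mod_cast Nat.choose_pos hj
  unfold b
  positivity

theorem B_eq_sum_b : B n k p = ∑ j ∈ Finset.range (k + 1), b n j p := rfl

theorem b_mul_eq_b_succ_mul (hj : j < n) :
    b n j p * ((n - j) * p) = b n (j + 1) p * ((j + 1) * (1 - p)) := by
  have hchoose : (n.choose (j + 1) : ℝ) * (j + 1) = n.choose j * (n - j) := by
    have h := congrArg (Nat.cast (R := ℝ)) (Nat.choose_succ_right_eq n j)
    push_cast [Nat.cast_sub hj.le] at h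
    exact h
  rw [b, b, show n - j = n - (j + 1) + 1 by omega, pow_succ, pow_succ]
  linear_combination (-(p ^ (j + 1)) * (1 - p) ^ (n - (j + 1)) * (1 - p)) * hchoose

theorem b_lt_b_succ (hp0 : 0 < p) (hp1 : p < 1) (hj : (j : ℝ) + 1 < p * (n + 1)) :
    b n j p < b n (j + 1) p := by
  have hjn : j < n := by
    have : (j : ℝ) < n := by nlinarith
    exact_mod_cast this
  have hratio : ((j : ℝ) + 1) * (1 - p) < (n - j) * p := by linarith
  refine lt_of_mul_lt_mul_right (a := (n - j) * p) ?_ (by nlinarith)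
  calc b n j p * ((n - j) * p) = b n (j + 1) p * ((j + 1) * (1 - p)) := b_mul_eq_b_succ_mul hjn
    _ < b n (j + 1) p * ((n - j) * p) := mul_lt_mul_of_pos_left hratio (b_pos hjn hp0 hp1)

theorem strictMonoOn_b (hp0 : 0 < p) (hp1 : p < 1) (hk : (k : ℝ) ≤ p * n) :
    StrictMonoOn (fun j => b n j p) (Set.Iic k) :=
  strictMonoOn_Iic_of_lt_succ fun j hj => b_lt_b_succ hp0 hp1 <| by
    have : (j : ℝ) + 1 ≤ k := by exact_mod_cast hj
    linarith

theorem B_lt_succ_mul_b (hp0 : 0 < p) (hp1 : p < 1) (hk : (k : ℝ) ≤ p * n) (hk1 : 1 ≤ k) :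
    B n k p < (k + 1) * b n k p := by
  have hmono := strictMonoOn_b hp0 hp1 hk
  have h := Finset.sum_lt_sum (s := Finset.range (k + 1)) (g := fun _ => b n k p)
    (fun j hj => hmono.monotoneOn (Finset.mem_range_succ_iff.mp hj) (Set.mem_Iic.mpr le_rfl)
      (Finset.mem_range_succ_iff.mp hj))
    ⟨0, by simp, hmono (Set.mem_Iic.mpr (Nat.zero_le k)) (Set.mem_Iic.mpr le_rfl) (by omega)⟩
  rw [B_eq_sum_b]
  simpa using h

theorem b_mul_le_b_succ_mul {M : ℕ} (hp0 : 0 ≤ p) (hp1 : p ≤ 1) (hiM : j < M)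
    (hMn : M ≤ n) :
    ((n - M + 1) * p) * b n j p ≤ (M * (1 - p)) * b n (j + 1) p := by
  have hid := b_mul_eq_b_succ_mul (p := p) (hiM.trans_le hMn)
  have hb := b_nonneg (n := n) (j := j) hp0 hp1
  have hb' := b_nonneg (n := n) (j := j + 1) hp0 hp1
  have hj : (j : ℝ) + 1 ≤ M := by exact_mod_cast hiM
  nlinarith [mul_nonneg hb hp0, mul_nonneg hb' (sub_nonneg.mpr hp1)]

end Binomial

section Ratio

theorem V_eq_add_one_add_div {n k p a : ℝ} (h : p * n + p - k + a ≠ 0) :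
    V n k p a = a + 1 + (k - a) * (1 - p) / (p * n + p - k + a) := by
  rw [V, show p * (n - k + a + 1) = (p * n + p - k + a) + (k - a) * (1 - p) by ring, add_div,
    div_self h]
  ring

theorem V_eq_add_div {n k p a : ℝ} (h : p * n + p - k + a ≠ 0) :
    V n k p a =
      k - p * n + ((p * n + p - k + a) + p * (1 - p) * (n + 1) / (p * n + p - k + a)) := by
  rw [V, show p * (n - k + a + 1) = p * (p * n + p - k + a) + p * (1 - p) * (n + 1) by ring,
    add_div, mul_div_assoc, div_self h]
  ring

variable {n k : ℕ} {p : ℝ}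

theorem V_denom_pos (hp0 : 0 < p) (hk : (k : ℝ) ≤ p * n) (a : ℕ) :
    0 < p * n + p - k + a := by
  have := a.cast_nonneg (α := ℝ)
  linarith

theorem V_natCast_self (hp0 : 0 < p) (hk : (k : ℝ) ≤ p * n) : V n k p k = k + 1 := by
  rw [V_eq_add_one_add_div (V_denom_pos hp0 hk k).ne']
  simp

theorem succ_le_V (hp0 : 0 < p) (hk : (k : ℝ) ≤ p * n) {a : ℕ} (hka : k ≤ a) :
    (k : ℝ) + 1 ≤ V n k p a := by
  have ht := V_denom_pos hp0 hk a
  rw [V_eq_add_one_add_div ht.ne']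
  rcases hka.eq_or_lt with rfl | hlt
  · simp
  · have hlt' : (k : ℝ) + 1 ≤ a := by exact_mod_cast hlt
    have hq : (a - k) * (1 - p) ≤ (a - k) * (p * n + p - k + a) := by nlinarith
    have : (k - a) * (1 - p) / (p * n + p - k + a) ≥ k - a := by
      rw [ge_iff_le, le_div_iff₀ ht]
      linarith
    linarith

theorem B_lt_b_mul_V_of_lt (hp0 : 0 < p) (hp1 : p < 1) (hk : (k : ℝ) ≤ p * n) {a : ℕ}
    (hak : a < k) : B n k p < b n k p * V n k p a := by
  set M := k - a with hM
  have hkn := natCast_le_of_le_mul hp1.le hk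
  have hmono := strictMonoOn_b hp0 hp1 hk
  have ht := V_denom_pos hp0 hk a
  have hMR : (M : ℝ) = k - a := by rw [hM, Nat.cast_sub hak.le]
  have hbk := b_pos hkn hp0 hp1
  have hhead : (p * n + p - k + a) * ∑ j ∈ Finset.range M, b n j p < M * (1 - p) * b n k p := by
    have h := Finset.sub_mul_sum_range_le (f := fun j => b n j p) fun i hi =>
      b_mul_le_b_succ_mul hp0.le hp1.le hi (by omega : M ≤ n)
    have hbM : b n M p ≤ b n k p := hmono.monotoneOn (Set.mem_Iic.mpr (by omega))
      (Set.mem_Iic.mpr le_rfl) (by omega)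
    have hb0 := b_pos (Nat.zero_le n) hp0 hp1
    have hM1 : (1 : ℝ) ≤ M := by exact_mod_cast (by omega : 1 ≤ M)
    have hq : 0 < (M : ℝ) * (1 - p) := by nlinarith
    rw [show ((n : ℝ) - M + 1) * p - M * (1 - p) = p * n + p - k + a by rw [hMR]; ring] at h
    nlinarith
  have htail : ∑ j ∈ Finset.range (a + 1), b n (M + j) p ≤ (a + 1) * b n k p := by
    have := Finset.sum_le_card_nsmul (Finset.range (a + 1)) (fun j => b n (M + j) p) (b n k p)
      fun j hj => hmono.monotoneOn (Set.mem_Iic.mpr (by simp at hj; omega))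
        (Set.mem_Iic.mpr le_rfl) (by simp at hj; omega)
    simpa using this
  have hsplit : B n k p =
      ∑ j ∈ Finset.range M, b n j p + ∑ j ∈ Finset.range (a + 1), b n (M + j) p := by
    rw [B_eq_sum_b, show k + 1 = M + (a + 1) by omega, Finset.sum_range_add]
  rw [V_eq_add_one_add_div ht.ne', ← hMR, hsplit]
  have : (p * n + p - k + a) * (b n k p * (a + 1 + M * (1 - p) / (p * n + p - k + a))) =
      (p * n + p - k + a) * ((a + 1) * b n k p) + M * (1 - p) * b n k p := by
    linear_combination b n k p * mul_div_cancel₀ ((M : ℝ) * (1 - p)) ht.ne'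
  nlinarith

end Ratio

section Minimum

variable {n k : ℕ} {p : ℝ}

theorem B_lt_b_mul_V (hp0 : 0 < p) (hp1 : p < 1) (hk : (k : ℝ) ≤ p * n) (hk1 : 1 ≤ k)
    (a : ℕ) :
    B n k p < b n k p * V n k p a := by
  rcases lt_or_ge a k with hak | hka
  · exact B_lt_b_mul_V_of_lt hp0 hp1 hk hak
  · calc B n k p < (k + 1) * b n k p := B_lt_succ_mul_b hp0 hp1 hk hk1
      _ ≤ b n k p * V n k p a := by
        rw [mul_comm]
        exact mul_le_mul_of_nonneg_left (succ_le_V hp0 hk hka)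
          (b_pos (natCast_le_of_le_mul hp1.le hk) hp0 hp1).le

theorem B_le_b_mul_V (hp0 : 0 < p) (hp1 : p < 1) (hk : (k : ℝ) ≤ p * n) (a : ℕ) :
    B n k p ≤ b n k p * V n k p a := by
  rcases Nat.eq_zero_or_pos k with rfl | hk1
  · have hV := succ_le_V hp0 hk (Nat.zero_le a)
    have hb := b_pos (Nat.zero_le n) hp0 hp1
    rw [B_eq_sum_b, Finset.sum_range_one]
    exact le_mul_of_one_le_right hb.le (by simpa using hV)
  · exact (B_lt_b_mul_V hp0 hp1 hk hk1 a).le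

/-- As `V n k p a ≥ k + 1 = V n k p k` for `a ≥ k`, the infimum is a minimum over `a ≤ k`. -/
theorem isLeast_U (hp0 : 0 < p) (hk : (k : ℝ) ≤ p * n) :
    IsLeast (Set.range fun a : ℕ => V n k p a) (U n k p) := by
  obtain ⟨a₀, -, hmin⟩ := Finset.exists_min_image (Finset.range (k + 1))
    (fun a : ℕ => V n k p a) ⟨k, Finset.self_mem_range_succ k⟩
  have hleast : IsLeast (Set.range fun a : ℕ => V n k p a) (V n k p a₀) := by
    refine ⟨⟨a₀, rfl⟩, ?_⟩
    rintro _ ⟨a, rfl⟩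
    rcases lt_or_ge a (k + 1) with ha | ha
    · exact hmin a (Finset.mem_range.mpr ha)
    · calc V n k p a₀ ≤ V n k p k := hmin k (Finset.self_mem_range_succ k)
        _ = k + 1 := V_natCast_self hp0 hk
        _ ≤ V n k p a := succ_le_V hp0 hk (by omega)
  rwa [U, hleast.isGLB.ciInf_eq]

theorem U_le_V (hp0 : 0 < p) (hk : (k : ℝ) ≤ p * n) (a : ℕ) :
    U n k p ≤ V n k p a :=
  (isLeast_U hp0 hk).2 ⟨a, rfl⟩

theorem U_zero (hp0 : 0 < p) : U n 0 p = 1 := by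
  have hk : ((0 : ℕ) : ℝ) ≤ p * n := by simpa using by positivity
  have h := isLeast_U hp0 hk
  rw [Nat.cast_zero] at h
  obtain ⟨⟨a, ha⟩, hleast⟩ := h
  refine le_antisymm ?_ ?_
  · have hV0 : V n 0 p ((0 : ℕ) : ℝ) = 1 := by simpa using V_natCast_self hp0 hk
    exact (hleast ⟨0, rfl⟩).trans_eq hV0
  · rw [← ha]
    simpa using succ_le_V hp0 hk (Nat.zero_le a)

end Minimum

theorem exists_nat_add_mem_Icc {d lo hi : ℝ} (hgap : lo + 1 ≤ hi) (hd : d ≤ hi) :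
    ∃ a : ℕ, d + a ∈ Set.Icc lo hi := by
  refine ⟨⌈lo - d⌉₊, by linarith [Nat.le_ceil (lo - d)], ?_⟩
  rcases le_or_gt (lo - d) 0 with h | h
  · simpa [Nat.ceil_eq_zero.mpr h] using hd
  · linarith [Nat.ceil_lt_add_one h.le]

theorem exists_nat_add_mem_Ioo {d lo hi : ℝ} (hgap : lo + 1 < hi) (hd : d < hi) :
    ∃ a : ℕ, d + a ∈ Set.Ioo lo hi := by
  rcases lt_or_ge lo d with h | h
  · exact ⟨0, by simpa using h, by simpa using hd⟩
  · refine ⟨⌊lo - d⌋₊ + 1, ?_, ?_⟩ <;> push_cast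
    · linarith [Nat.lt_floor_add_one (lo - d)]
    · linarith [Nat.floor_le (sub_nonneg.mpr h)]

theorem add_div_le_of_mem_Icc {t lo hi : ℝ} (ht : 0 < t) (h : t ∈ Set.Icc lo hi) :
    t + lo * hi / t ≤ lo + hi := by
  have : lo * hi ≤ (lo + hi - t) * t := by nlinarith [h.1, h.2]
  rw [← le_sub_iff_add_le', div_le_iff₀ ht]
  exact this

theorem add_div_lt_of_mem_Ioo {t lo hi : ℝ} (ht : 0 < t) (h : t ∈ Set.Ioo lo hi) :
    t + lo * hi / t < lo + hi := by
  have : lo * hi < (lo + hi - t) * t := by nlinarith [h.1, h.2]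
  rw [← lt_sub_iff_add_lt', div_lt_iff₀ ht]
  exact this

section Quadratic

variable {n k : ℕ} {p : ℝ}

theorem exists_V_le (hp0 : 0 < p) (hk : (k : ℝ) ≤ p * n) {m : ℝ}
    (hD : 1 ≤ m ^ 2 - 4 * (p * (1 - p) * (n + 1)))
    (hd : 2 * (p * n + p - k) ≤ m + √(m ^ 2 - 4 * (p * (1 - p) * (n + 1)))) :
    ∃ a : ℕ, V n k p a ≤ k - p * n + m := by
  set D := m ^ 2 - 4 * (p * (1 - p) * (n + 1))
  have hsqrt : √D ^ 2 = D := Real.sq_sqrt (by linarith)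
  have h1 : 1 ≤ √D := Real.one_le_sqrt.mpr hD
  obtain ⟨a, ha⟩ := exists_nat_add_mem_Icc (d := p * n + p - k) (lo := (m - √D) / 2)
    (hi := (m + √D) / 2) (by linarith) (by linarith)
  refine ⟨a, ?_⟩
  have ht := V_denom_pos hp0 hk a
  have hc : (m - √D) / 2 * ((m + √D) / 2) = p * (1 - p) * (n + 1) := by
    linear_combination (-1 / 4 : ℝ) * hsqrt
  rw [V_eq_add_div ht.ne', ← hc]
  linarith [add_div_le_of_mem_Icc ht ha]

theorem exists_V_lt (hp0 : 0 < p) (hk : (k : ℝ) ≤ p * n) {m : ℝ}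
    (hD : 1 < m ^ 2 - 4 * (p * (1 - p) * (n + 1)))
    (hd : 2 * (p * n + p - k) < m + √(m ^ 2 - 4 * (p * (1 - p) * (n + 1)))) :
    ∃ a : ℕ, V n k p a < k - p * n + m := by
  set D := m ^ 2 - 4 * (p * (1 - p) * (n + 1))
  have hsqrt : √D ^ 2 = D := Real.sq_sqrt (by linarith)
  have h1 : 1 < √D := Real.lt_sqrt (by norm_num) |>.mpr (by simpa using hD)
  obtain ⟨a, ha⟩ := exists_nat_add_mem_Ioo (d := p * n + p - k) (lo := (m - √D) / 2)
    (hi := (m + √D) / 2) (by linarith) (by linarith)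
  refine ⟨a, ?_⟩
  have ht := V_denom_pos hp0 hk a
  have hc : (m - √D) / 2 * ((m + √D) / 2) = p * (1 - p) * (n + 1) := by
    linear_combination (-1 / 4 : ℝ) * hsqrt
  rw [V_eq_add_div ht.ne', ← hc]
  linarith [add_div_lt_of_mem_Ioo ht ha]

theorem U_lt_two_mul_L (hp0 : 0 < p) (hp1 : p < 1) (hk : (k : ℝ) ≤ p * n) :
    U n k p < 2 * L n k p := by
  set s : ℝ := p * n - k
  have hs : 0 ≤ s := sub_nonneg.mpr hk
  set E := √((p * n - k + 1) ^ 2 + 4 * (1 - p) * k)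
  have hE2 : E ^ 2 = (s + 1) ^ 2 + 4 * (1 - p) * k := Real.sq_sqrt (by positivity)
  have hE : s + 1 ≤ E := Real.le_sqrt_of_sq_le (by nlinarith [k.cast_nonneg (α := ℝ)])
  have hD : s ^ 2 + 3 ≤ (1 + E) ^ 2 - 4 * (p * (1 - p) * (n + 1)) := by
    nlinarith [sq_nonneg (1 - 2 * p), mul_nonneg hp0.le hs]
  have hsqrt : s ≤ √((1 + E) ^ 2 - 4 * (p * (1 - p) * (n + 1))) :=
    Real.le_sqrt_of_sq_le (by linarith)
  obtain ⟨a, ha⟩ := exists_V_lt hp0 hk (m := 1 + E) (by nlinarith) (by linarith)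
  calc U n k p ≤ V n k p a := U_le_V hp0 hk a
    _ < k - p * n + (1 + E) := ha
    _ = 2 * L n k p := by rw [L]; ring

theorem U_le_one_add_two_mul_sqrt (hp0 : 0 < p) (hp1 : p < 1) (hk : (k : ℝ) ≤ p * n) :
    U n k p ≤ 1 + 2 * √((1 - p) * (k + p)) := by
  set s : ℝ := p * n - k
  have hs : 0 ≤ s := sub_nonneg.mpr hk
  set w := √((1 - p) * (k + p))
  have hw0 : 0 ≤ w := Real.sqrt_nonneg _
  have hw2 : w ^ 2 = (1 - p) * (k + p) := Real.sq_sqrt (by nlinarith [k.cast_nonneg (α := ℝ)])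
  have hc : p * (1 - p) * (n + 1) = w ^ 2 + (1 - p) * s := by rw [hw2]; ring
  suffices ∃ a : ℕ, V n k p a ≤ k - p * n + (1 + s + 2 * w) by
    obtain ⟨a, ha⟩ := this
    linarith [U_le_V hp0 hk a]
  rcases le_or_gt w (s + p) with hw | hw
  · refine ⟨0, ?_⟩
    have ht := V_denom_pos hp0 hk 0
    rw [V_eq_add_div ht.ne', Nat.cast_zero, add_zero, hc, add_le_add_iff_left,
      ← le_sub_iff_add_le', div_le_iff₀ (by simpa using ht)]
    nlinarith [mul_nonneg hw0 (by linarith : 0 ≤ 2 * (s + p) - w), mul_pos hp0 (sub_pos.mpr hp1)]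
  · have hD : 1 ≤ (1 + s + 2 * w) ^ 2 - 4 * (p * (1 - p) * (n + 1)) := by
      rw [hc]
      nlinarith [mul_nonneg hs (by linarith : 0 ≤ w - (s + p))]
    refine exists_V_le hp0 hk hD ?_
    linarith [Real.one_le_sqrt.mpr hD]

end Quadratic

theorem binomial_ratio_upper_bound
    (k n : ℕ) (p : ℝ) (hp0 : 0 < p) (hp1 : p < 1) (hk : (k : ℝ) ≤ p * n) :
    (B n k p / b n k p ≤ U n k p ∧ U n k p < 2 * L n k p) ∧
    (B n k p / b n k p = U n k p ↔ k = 0) ∧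
    U n k p ≤ 1 + 2 * Real.sqrt ((1 - p) * ((k : ℝ) + p)) := by
  have hb := b_pos (natCast_le_of_le_mul hp1.le hk) hp0 hp1
  obtain ⟨⟨a₀, ha₀⟩, -⟩ := isLeast_U hp0 hk
  have hratio_le : B n k p / b n k p ≤ U n k p :=
    ha₀ ▸ (div_le_iff₀' hb).mpr (B_le_b_mul_V hp0 hp1 hk a₀)
  refine ⟨⟨hratio_le, U_lt_two_mul_L hp0 hp1 hk⟩, ⟨fun heq => ?_, fun hk0 => ?_⟩,
    U_le_one_add_two_mul_sqrt hp0 hp1 hk⟩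
  · by_contra hk0
    have hk1 : 1 ≤ k := Nat.one_le_iff_ne_zero.mpr hk0
    have hlt : B n k p / b n k p < U n k p :=
      ha₀ ▸ (div_lt_iff₀' hb).mpr (B_lt_b_mul_V hp0 hp1 hk hk1 a₀)
    exact hlt.ne heq
  · subst hk0
    rw [B_eq_sum_b, Finset.sum_range_one, div_self hb.ne', Nat.cast_zero, U_zero hp0]
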